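/- Upper-bound ingredient for the inf–sup constant in Theorem 3.3: let u(x₁,x₂) = e^{ikx₁}(x₁² + x₂² − R²). Then for every continuously differentiable v : ℝ² → ℂ with compact support contained in the open disk B_R, | ∫_{B_R} ( ∇u · conj(∇v) − k² u · conj(v) ) dx | ≤ 2√π · R · (2 + kR) · ( ∫_{B_R} |v|² dx )^{1/2}. -/

import Mathlib

open MeasureTheory Real

noncomputable section

/-- `u(x₁,x₂) = e^{ikx₁}(x₁² + x₂² − R²)` as a function on `ℝ²`. -/
def uTest (k R : ℝ) (p : ℝ × ℝ) : ℂ :=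
  Complex.exp (Complex.I * k * p.1) * ((p.1 ^ 2 + p.2 ^ 2 - R ^ 2 : ℝ) : ℂ)

/-- The open disk of radius `R` centered at the origin in `ℝ²`. -/
def diskR (R : ℝ) : Set (ℝ × ℝ) := {p : ℝ × ℝ | p.1 ^ 2 + p.2 ^ 2 < R ^ 2}

/-!
Since `v` is compactly supported in `B_R`, integrating by parts turns the form into
`-∫_{B_R} (Δu + k²u) · conj v`, and `Δu + k²u = e^{ikx₁}(4 + 4ikx₁)`. Cauchy–Schwarz bounds this by
`‖Δu + k²u‖_{L²(B_R)} ‖v‖_{L²(B_R)}`, and in polar coordinates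
`‖Δu + k²u‖²_{L²(B_R)} = ∫_{B_R} (16 + 16k²x₁²) = 4πR²(4 + k²R²) ≤ (2√π R (2 + kR))²`.
-/

open Set
open scoped ENNReal

section IntegrationByParts

variable {E 𝕜 : Type*} [NormedAddCommGroup E] [NormedSpace ℝ E] [FiniteDimensional ℝ E]
  [MeasurableSpace E] [BorelSpace E] {μ : Measure E} [μ.IsAddHaarMeasure] [RCLike 𝕜]

theorem integral_mul_fderiv_eq_neg_fderiv_mul_of_hasCompactSupport {f g : E → 𝕜}
    (hf : ContDiff ℝ 1 f) (hg : ContDiff ℝ 1 g) (hgc : HasCompactSupport g) (d : E) :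
    ∫ x, f x * fderiv ℝ g x d ∂μ = -∫ x, fderiv ℝ f x d * g x ∂μ := by
  have hf' : Continuous fun x => fderiv ℝ f x d :=
    (hf.continuous_fderiv one_ne_zero).clm_apply continuous_const
  have hg' : Continuous fun x => fderiv ℝ g x d :=
    (hg.continuous_fderiv one_ne_zero).clm_apply continuous_const
  exact integral_mul_fderiv_eq_neg_fderiv_mul_of_integrable
    ((hf'.mul hg.continuous).integrable_of_hasCompactSupport hgc.mul_left)
    ((hf.continuous.mul hg').integrable_of_hasCompactSupport
      (hgc.fderiv_apply (𝕜 := ℝ) d).mul_left)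
    ((hf.continuous.mul hg.continuous).integrable_of_hasCompactSupport hgc.mul_left)
    (fun x _ => hf.differentiable one_ne_zero x) (fun x _ => hg.differentiable one_ne_zero x)

theorem integral_fderiv_mul_conj_fderiv_eq_neg {u v : E → 𝕜} (hu : ContDiff ℝ 2 u)
    (hv : ContDiff ℝ 1 v) (hvc : HasCompactSupport v) (d : E) :
    ∫ x, fderiv ℝ u x d * starRingEnd 𝕜 (fderiv ℝ v x d) ∂μ =
      -∫ x, fderiv ℝ (fun y => fderiv ℝ u y d) x d * starRingEnd 𝕜 (v x) ∂μ := by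
  have hud : ContDiff ℝ 1 fun y => fderiv ℝ u y d :=
    (hu.fderiv_right (by norm_num)).clm_apply contDiff_const
  have hv' : ContDiff ℝ 1 fun x => star (v x) := (starL' ℝ : 𝕜 ≃L[ℝ] 𝕜).contDiff.comp hv
  have := integral_mul_fderiv_eq_neg_fderiv_mul_of_hasCompactSupport (μ := μ) hud hv'
    (hvc.comp_left (star_zero _)) d
  simp only [starRingEnd_apply, fderiv_star] at this ⊢
  simpa using this

theorem integral_helmholtz_form_eq_neg {u v : E → 𝕜} (hu : ContDiff ℝ 2 u)
    (hv : ContDiff ℝ 1 v) (hvc : HasCompactSupport v) (d₁ d₂ : E) (c : 𝕜) :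
    ∫ x, (fderiv ℝ u x d₁ * starRingEnd 𝕜 (fderiv ℝ v x d₁) +
        fderiv ℝ u x d₂ * starRingEnd 𝕜 (fderiv ℝ v x d₂) - c * u x * starRingEnd 𝕜 (v x)) ∂μ =
      -∫ x, (fderiv ℝ (fun y => fderiv ℝ u y d₁) x d₁ +
        fderiv ℝ (fun y => fderiv ℝ u y d₂) x d₂ + c * u x) * starRingEnd 𝕜 (v x) ∂μ := by
  have hint {f g : E → 𝕜} (hf : Continuous f) (hg : Continuous g) (hgc : HasCompactSupport g) :
      Integrable (fun x => f x * g x) μ :=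
    (hf.mul hg).integrable_of_hasCompactSupport hgc.mul_left
  have hDu (d : E) : ContDiff ℝ 1 fun y => fderiv ℝ u y d :=
    (hu.fderiv_right (by norm_num)).clm_apply contDiff_const
  have hDDu (d : E) : Continuous fun x => fderiv ℝ (fun y => fderiv ℝ u y d) x d :=
    ((hDu d).continuous_fderiv one_ne_zero).clm_apply continuous_const
  have hDv (d : E) : Continuous fun x => starRingEnd 𝕜 (fderiv ℝ v x d) :=
    RCLike.continuous_conj.comp ((hv.continuous_fderiv one_ne_zero).clm_apply continuous_const)
  have hDvc (d : E) : HasCompactSupport fun x => starRingEnd 𝕜 (fderiv ℝ v x d) :=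
    (hvc.fderiv_apply (𝕜 := ℝ) d).comp_left (map_zero _)
  have hv' : Continuous fun x => starRingEnd 𝕜 (v x) := RCLike.continuous_conj.comp hv.continuous
  have hvc' : HasCompactSupport fun x => starRingEnd 𝕜 (v x) := hvc.comp_left (map_zero _)
  have I₁ := hint (hDu d₁).continuous (hDv d₁) (hDvc d₁)
  have I₂ := hint (hDu d₂).continuous (hDv d₂) (hDvc d₂)
  have J₁ := hint (hDDu d₁) hv' hvc'
  have J₂ := hint (hDDu d₂) hv' hvc'
  have K := hint (f := fun x => c * u x) (continuous_const.mul hu.continuous) hv' hvc'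
  simp only [add_mul]
  rw [integral_sub ?_ K, integral_add I₁ I₂, integral_add ?_ K, integral_add J₁ J₂,
    integral_fderiv_mul_conj_fderiv_eq_neg hu hv hvc,
    integral_fderiv_mul_conj_fderiv_eq_neg hu hv hvc]
  · ring
  · exact J₁.add J₂
  · exact I₁.add I₂

end IntegrationByParts

theorem norm_integral_mul_le_sqrt_mul_sqrt {α 𝕜 : Type*} [MeasurableSpace α] [RCLike 𝕜]
    {μ : Measure α} {f g : α → 𝕜} (hf : MemLp f 2 μ) (hg : MemLp g 2 μ) :
    ‖∫ x, f x * g x ∂μ‖ ≤ √(∫ x, ‖f x‖ ^ 2 ∂μ) * √(∫ x, ‖g x‖ ^ 2 ∂μ) := by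
  have hsqrt (h : α → 𝕜) : √(∫ x, ‖h x‖ ^ 2 ∂μ) = (∫ x, ‖h x‖ ^ (2 : ℝ) ∂μ) ^ (1 / (2 : ℝ)) := by
    simp_rw [Real.sqrt_eq_rpow, Real.rpow_two]
  rw [hsqrt, hsqrt]
  calc ‖∫ x, f x * g x ∂μ‖ ≤ ∫ x, ‖f x‖ * ‖g x‖ ∂μ := by
        simpa only [norm_mul] using norm_integral_le_integral_norm (fun x => f x * g x)
    _ ≤ _ := integral_mul_norm_le_Lp_mul_Lq Real.HolderConjugate.two_two
        (by simpa using hf) (by simpa using hg)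

theorem ContinuousOn.memLp_restrict_of_isCompact {X E : Type*} [TopologicalSpace X]
    [T2Space X] [MeasurableSpace X] [OpensMeasurableSpace X] [NormedAddCommGroup E]
    {μ : Measure X} [IsFiniteMeasureOnCompacts μ] {f : X → E} {K : Set X}
    (hf : ContinuousOn f K) (hK : IsCompact K) (p : ℝ≥0∞) : MemLp f p (μ.restrict K) := by
  have : IsFiniteMeasure (μ.restrict K) := isFiniteMeasure_restrict.2 hK.measure_ne_top
  obtain ⟨C, hC⟩ := hK.exists_bound_of_continuousOn hf
  exact .of_bound (hf.aestronglyMeasurable_of_isCompact hK hK.measurableSet) C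
    ((ae_restrict_iff' hK.measurableSet).2 (.of_forall hC))

theorem setIntegral_Ioo_prod_Ioo {E : Type*} [NormedAddCommGroup E] [NormedSpace ℝ E]
    {g : ℝ × ℝ → E} (hg : Continuous g) {a b c d : ℝ} (hab : a ≤ b) (hcd : c ≤ d) :
    ∫ q in Ioo a b ×ˢ Ioo c d, g q = ∫ x in a..b, ∫ y in c..d, g (x, y) := by
  have hint : IntegrableOn g (Icc a b ×ˢ Icc c d) :=
    hg.continuousOn.integrableOn_compact (isCompact_Icc.prod isCompact_Icc)
  rw [Measure.volume_eq_prod, setIntegral_prod _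
      (hint.mono_set (prod_mono Ioo_subset_Icc_self Ioo_subset_Icc_self)),
    intervalIntegral.integral_of_le hab, integral_Ioc_eq_integral_Ioo]
  refine setIntegral_congr_fun measurableSet_Ioo fun x _ => ?_
  rw [intervalIntegral.integral_of_le hcd, integral_Ioc_eq_integral_Ioo]

theorem measurableSet_diskR (R : ℝ) : MeasurableSet (diskR R) :=
  (isOpen_lt (by fun_prop) continuous_const).measurableSet

theorem diskR_subset_closedBall (R : ℝ) : diskR R ⊆ Metric.closedBall 0 |R| := by
  intro p (hp : p.1 ^ 2 + p.2 ^ 2 < R ^ 2)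
  have h₁ : p.1 ^ 2 ≤ R ^ 2 := by nlinarith [sq_nonneg p.2]
  have h₂ : p.2 ^ 2 ≤ R ^ 2 := by nlinarith [sq_nonneg p.1]
  rw [mem_closedBall_zero_iff, Prod.norm_def, max_le_iff, Real.norm_eq_abs, Real.norm_eq_abs]
  exact ⟨sq_le_sq.1 h₁, sq_le_sq.1 h₂⟩

theorem Continuous.memLp_restrict_diskR {E : Type*} [NormedAddCommGroup E] {f : ℝ × ℝ → E}
    (hf : Continuous f) (R : ℝ) (p : ℝ≥0∞) : MemLp f p (volume.restrict (diskR R)) :=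
  (hf.continuousOn.memLp_restrict_of_isCompact (isCompact_closedBall 0 |R|) p).mono_measure
    (Measure.restrict_mono (diskR_subset_closedBall R) le_rfl)

theorem polarCoord_target_inter_preimage_diskR {R : ℝ} (hR : 0 ≤ R) :
    polarCoord.target ∩ polarCoord.symm ⁻¹' diskR R = Ioo 0 R ×ˢ Ioo (-π) π := by
  ext ⟨r, θ⟩
  have hnorm : (r * cos θ) ^ 2 + (r * sin θ) ^ 2 = r ^ 2 := by
    linear_combination r ^ 2 * sin_sq_add_cos_sq θ
  simp only [polarCoord_target, polarCoord_symm_apply, diskR, mem_inter_iff, mem_prod,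
    mem_preimage, mem_ofPred_eq, mem_Ioi, mem_Ioo, hnorm]
  constructor
  · rintro ⟨⟨hr, hθ⟩, hrR⟩
    exact ⟨⟨hr, (pow_lt_pow_iff_left₀ hr.le hR two_ne_zero).1 hrR⟩, hθ⟩
  · rintro ⟨⟨hr, hrR⟩, hθ⟩
    exact ⟨⟨hr, hθ⟩, pow_lt_pow_left₀ hrR hr.le two_ne_zero⟩

theorem setIntegral_diskR_eq_polar {E : Type*} [NormedAddCommGroup E] [NormedSpace ℝ E]
    {f : ℝ × ℝ → E} (hf : Continuous f) {R : ℝ} (hR : 0 ≤ R) :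
    ∫ p in diskR R, f p = ∫ r in 0..R, ∫ θ in -π..π, r • f (r * cos θ, r * sin θ) := by
  have hind (q : ℝ × ℝ) : q.1 • (diskR R).indicator f (polarCoord.symm q) =
      (polarCoord.symm ⁻¹' diskR R).indicator (fun q => q.1 • f (polarCoord.symm q)) q := by
    by_cases hq : polarCoord.symm q ∈ diskR R
    · rw [indicator_of_mem hq, indicator_of_mem (mem_preimage.2 hq)]
    · rw [indicator_of_notMem hq, indicator_of_notMem (mt mem_preimage.1 hq), smul_zero]
  rw [← integral_indicator (measurableSet_diskR R), ← integral_comp_polarCoord_symm]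
  simp_rw [hind]
  rw [setIntegral_indicator
      ((measurableSet_diskR R).preimage continuous_polarCoord_symm.measurable),
    polarCoord_target_inter_preimage_diskR hR,
    setIntegral_Ioo_prod_Ioo (by fun_prop) hR (by linarith [pi_pos])]
  rfl

theorem setIntegral_diskR_add_mul_fst_sq {R : ℝ} (hR : 0 ≤ R) (a b : ℝ) :
    ∫ p in diskR R, (a + b * p.1 ^ 2) = π * R ^ 2 * a + π * R ^ 4 / 4 * b := by
  have hθ (r : ℝ) : ∫ θ in -π..π, r • (a + b * (r * cos θ) ^ 2) =
      2 * π * a * r + π * b * r ^ 3 := by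
    simp_rw [smul_eq_mul, mul_pow, show ∀ θ, r * (a + b * (r ^ 2 * cos θ ^ 2)) =
      r * a + b * r ^ 3 * cos θ ^ 2 from fun θ => by ring]
    rw [intervalIntegral.integral_add intervalIntegrable_const
        ((by fun_prop : Continuous fun θ => b * r ^ 3 * cos θ ^ 2).intervalIntegrable _ _),
      intervalIntegral.integral_const_mul (b * r ^ 3), integral_cos_sq]
    simp only [intervalIntegral.integral_const, smul_eq_mul, cos_pi, sin_pi, cos_neg, sin_neg]
    ring
  rw [setIntegral_diskR_eq_polar (by fun_prop) hR]
  simp_rw [hθ]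
  rw [intervalIntegral.integral_add
      ((by fun_prop : Continuous fun r => 2 * π * a * r).intervalIntegrable _ _)
      ((by fun_prop : Continuous fun r => π * b * r ^ 3).intervalIntegrable _ _),
    intervalIntegral.integral_const_mul, intervalIntegral.integral_const_mul, integral_id,
    integral_pow]
  ring

/-- The span of `e^{ikx₁}·{1, x₁, x₂, x₁² + x₂² − R²}` is stable under `∂₁` and `∂₂`, so all
derivatives of `uTest k R` can be computed inside this family. -/
def planeWavePoly (k R : ℝ) (c₀ c₁ c₂ c₃ : ℂ) (p : ℝ × ℝ) : ℂ :=
  Complex.exp (Complex.I * k * p.1) *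
    (c₀ + c₁ * p.1 + c₂ * p.2 + c₃ * ((p.1 : ℂ) ^ 2 + (p.2 : ℂ) ^ 2 - (R : ℂ) ^ 2))

theorem fderiv_planeWavePoly_apply (k R : ℝ) (c₀ c₁ c₂ c₃ : ℂ) (p d : ℝ × ℝ) :
    fderiv ℝ (planeWavePoly k R c₀ c₁ c₂ c₃) p d =
      Complex.exp (Complex.I * k * p.1) *
        (Complex.I * k * d.1 *
            (c₀ + c₁ * p.1 + c₂ * p.2 + c₃ * ((p.1 : ℂ) ^ 2 + (p.2 : ℂ) ^ 2 - (R : ℂ) ^ 2)) +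
          c₁ * d.1 + c₂ * d.2 + 2 * c₃ * (p.1 * d.1 + p.2 * d.2)) := by
  have hfst : HasFDerivAt (fun p : ℝ × ℝ => (p.1 : ℂ))
      (Complex.ofRealCLM.comp (ContinuousLinearMap.fst ℝ ℝ ℝ)) p :=
    Complex.ofRealCLM.hasFDerivAt.comp p hasFDerivAt_fst
  have hsnd : HasFDerivAt (fun p : ℝ × ℝ => (p.2 : ℂ))
      (Complex.ofRealCLM.comp (ContinuousLinearMap.snd ℝ ℝ ℝ)) p :=
    Complex.ofRealCLM.hasFDerivAt.comp p hasFDerivAt_snd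
  have h : HasFDerivAt (planeWavePoly k R c₀ c₁ c₂ c₃) _ p :=
    ((hfst.const_mul _).cexp).mul ((((hfst.const_mul c₁).const_add c₀).add
      (hsnd.const_mul c₂)).add ((((hfst.pow 2).add (hsnd.pow 2)).sub_const _).const_mul c₃))
  rw [h.fderiv]
  simp only [add_apply, smul_apply,
    ContinuousLinearMap.comp_apply, ContinuousLinearMap.coe_fst', ContinuousLinearMap.coe_snd',
    Complex.ofRealCLM_apply, smul_eq_mul, nsmul_eq_mul]
  ring

theorem fderiv_planeWavePoly_fst (k R : ℝ) (c₀ c₁ c₂ c₃ : ℂ) (p : ℝ × ℝ) :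
    fderiv ℝ (planeWavePoly k R c₀ c₁ c₂ c₃) p (1, 0) =
      planeWavePoly k R (Complex.I * k * c₀ + c₁) (Complex.I * k * c₁ + 2 * c₃)
        (Complex.I * k * c₂) (Complex.I * k * c₃) p := by
  rw [fderiv_planeWavePoly_apply, planeWavePoly]
  push_cast
  ring

theorem fderiv_planeWavePoly_snd (k R : ℝ) (c₀ c₁ c₂ c₃ : ℂ) (p : ℝ × ℝ) :
    fderiv ℝ (planeWavePoly k R c₀ c₁ c₂ c₃) p (0, 1) = planeWavePoly k R c₂ 0 (2 * c₃) 0 p := by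
  rw [fderiv_planeWavePoly_apply, planeWavePoly]
  push_cast
  ring

theorem uTest_eq_planeWavePoly (k R : ℝ) : uTest k R = planeWavePoly k R 0 0 0 1 := by
  funext p
  simp [uTest, planeWavePoly]

theorem contDiff_uTest (k R : ℝ) : ContDiff ℝ 2 (uTest k R) := by
  have hofReal {f : ℝ × ℝ → ℝ} (hf : ContDiff ℝ 2 f) : ContDiff ℝ 2 fun p => (f p : ℂ) :=
    Complex.ofRealCLM.contDiff.comp hf
  exact ((contDiff_const.mul (hofReal contDiff_fst)).cexp).mul (hofReal (by fun_prop))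

/-- `Δu + k²u` for `u = uTest k R`. -/
def uTestResidual (k : ℝ) (p : ℝ × ℝ) : ℂ :=
  Complex.exp (Complex.I * k * p.1) * (4 + 4 * Complex.I * k * p.1)

theorem helmholtz_uTest_eq_residual (k R : ℝ) (p : ℝ × ℝ) :
    fderiv ℝ (fun q => fderiv ℝ (uTest k R) q (1, 0)) p (1, 0) +
        fderiv ℝ (fun q => fderiv ℝ (uTest k R) q (0, 1)) p (0, 1) +
        ((k ^ 2 : ℝ) : ℂ) * uTest k R p = uTestResidual k p := by
  simp only [uTest_eq_planeWavePoly, fderiv_planeWavePoly_fst, fderiv_planeWavePoly_snd]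
  simp only [planeWavePoly, uTestResidual]
  push_cast
  linear_combination Complex.exp (Complex.I * k * p.1) * k ^ 2 *
    ((p.1 : ℂ) ^ 2 + (p.2 : ℂ) ^ 2 - (R : ℂ) ^ 2) * Complex.I_sq

theorem continuous_uTestResidual (k : ℝ) : Continuous (uTestResidual k) := by
  unfold uTestResidual
  fun_prop

theorem norm_uTestResidual_sq (k : ℝ) (p : ℝ × ℝ) :
    ‖uTestResidual k p‖ ^ 2 = 16 + 16 * k ^ 2 * p.1 ^ 2 := by
  rw [uTestResidual, norm_mul, mul_pow, mul_assoc, ← Complex.ofReal_mul,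
    Complex.norm_exp_I_mul_ofReal, one_pow, one_mul, Complex.sq_norm, Complex.normSq_apply]
  simp only [Complex.add_re, Complex.add_im, Complex.mul_re, Complex.mul_im, Complex.I_re,
    Complex.I_im, Complex.ofReal_re, Complex.ofReal_im, Complex.re_ofNat, Complex.im_ofNat]
  ring

theorem sqrt_integral_norm_uTestResidual_sq_le {k R : ℝ} (hk : 0 ≤ k) (hR : 0 ≤ R) :
    √(∫ p in diskR R, ‖uTestResidual k p‖ ^ 2) ≤ 2 * √π * R * (2 + k * R) := by
  have hL2 : ∫ p in diskR R, ‖uTestResidual k p‖ ^ 2 = 4 * π * R ^ 2 * (4 + k ^ 2 * R ^ 2) := by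
    simp only [norm_uTestResidual_sq]
    rw [setIntegral_diskR_add_mul_fst_sq hR]
    ring
  rw [hL2, ← Real.sqrt_sq (by positivity : 0 ≤ 2 * √π * R * (2 + k * R))]
  gcongr
  rw [mul_pow, mul_pow, mul_pow, Real.sq_sqrt pi_pos.le]
  nlinarith [mul_nonneg (mul_nonneg pi_pos.le (sq_nonneg R)) (mul_nonneg hk hR)]

/-- Upper-bound ingredient for the inf–sup constant in Theorem 3.3: for
`u(x₁,x₂) = e^{ikx₁}(x₁²+x₂²−R²)` and every continuously differentiable `v : ℝ² → ℂ`
with compact support contained in the open disk `B_R`,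
`|∫_{B_R} (∇u·conj(∇v) − k² u conj(v))| ≤ 2√π R (2+kR) ‖v‖_{L²(B_R)}`. -/
theorem infsup_upper_bound_ingredient (k R : ℝ) (hk : 0 < k) (hR : 0 < R)
    (v : ℝ × ℝ → ℂ) (hv : ContDiff ℝ 1 v) (hvcpt : HasCompactSupport v)
    (hvsupp : tsupport v ⊆ diskR R) :
    ‖∫ p in diskR R,
        (fderiv ℝ (uTest k R) p (1, 0) * starRingEnd ℂ (fderiv ℝ v p (1, 0)) +
          fderiv ℝ (uTest k R) p (0, 1) * starRingEnd ℂ (fderiv ℝ v p (0, 1)) -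
          (k ^ 2 : ℝ) * uTest k R p * starRingEnd ℂ (v p))‖ ≤
      2 * Real.sqrt π * R * (2 + k * R) * Real.sqrt (∫ p in diskR R, ‖v p‖ ^ 2) := by
  have hextend {f : ℝ × ℝ → ℂ} (hf : ∀ p ∉ tsupport v, f p = 0) :
      ∫ p in diskR R, f p = ∫ p, f p :=
    setIntegral_eq_integral_of_forall_compl_eq_zero fun p hp => hf p fun h => hp (hvsupp h)
  have hweak := integral_helmholtz_form_eq_neg (μ := volume) (contDiff_uTest k R) hv hvcpt
    (1, 0) (0, 1) ((k ^ 2 : ℝ) : ℂ)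
  simp only [helmholtz_uTest_eq_residual] at hweak
  have hvL2 : MemLp (fun p => starRingEnd ℂ (v p)) 2 (volume.restrict (diskR R)) :=
    ((Complex.continuous_conj.comp hv.continuous).memLp_of_hasCompactSupport
      (hvcpt.comp_left (map_zero _))).restrict _
  calc _ = ‖∫ p in diskR R, uTestResidual k p * starRingEnd ℂ (v p)‖ := by
        rw [hextend, hweak, norm_neg, hextend]
        · intro p hp
          simp [image_eq_zero_of_notMem_tsupport hp]
        · intro p hp
          simp [image_eq_zero_of_notMem_tsupport hp, fderiv_of_notMem_tsupport ℝ hp]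
    _ ≤ √(∫ p in diskR R, ‖uTestResidual k p‖ ^ 2) * √(∫ p in diskR R, ‖v p‖ ^ 2) := by
        simpa only [Complex.norm_conj] using norm_integral_mul_le_sqrt_mul_sqrt
          ((continuous_uTestResidual k).memLp_restrict_diskR R 2) hvL2
    _ ≤ _ := by
        gcongr
        exact sqrt_integral_norm_uTestResidual_sq_le hk.le hR.le
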